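/- arXiv:0805.3155 — 2 statements merged into one kernel-verified Lean document; each statement's English description precedes it below -/
import Mathlib

section
/- Let k ≥ 1 be an integer and s ≥ 0, and for α ∈ [0,1] let h*(α) denote the smallest fixed point in [0,1] of f_α(x) = 1 − (1−α) g_{k,s}(x), where g_{k,s}(x) = ∑_{i=0}^{⌊s⌋} C(k,i) x^i (1−x)^{k−i}. Then α ↦ h*(α) is monotone nondecreasing on [0,1]. -/
/-! At `α₁ ≤ α₂` the map `f_{α₁}` lies above `f_{α₂}` on `[0,1]`, so `f_{α₁}(h₂) ≤ h₂`, while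
`f_{α₁}(0) = α₁ ≥ 0`. By the intermediate value theorem `f_{α₁}` has a fixed point in `[0, h₂]`,
and the least one, `h₁`, is at most `h₂`. -/

/-- `binCdf k s x = P(Bin(k,x) ≤ s) = ∑_{i=0}^{⌊s⌋} C(k,i) x^i (1-x)^{k-i}`,
the function `g_{k,s}(x)` of the paper. -/
noncomputable def binCdf (k : ℕ) (s : ℝ) (x : ℝ) : ℝ :=
  ∑ i ∈ Finset.range (⌊s⌋₊ + 1), (k.choose i : ℝ) * x ^ i * (1 - x) ^ (k - i)

open Set

lemma binCdf_nonneg (k : ℕ) (s : ℝ) {x : ℝ} (hx : x ∈ Icc (0 : ℝ) 1) : 0 ≤ binCdf k s x :=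
  Finset.sum_nonneg fun _ _ => by
    have : 0 ≤ 1 - x := sub_nonneg.2 hx.2
    have := hx.1
    positivity

@[fun_prop]
lemma binCdf_continuous (k : ℕ) (s : ℝ) : Continuous (binCdf k s) := by
  unfold binCdf
  fun_prop

@[simp]
lemma binCdf_zero (k : ℕ) (s : ℝ) : binCdf k s 0 = 1 := by
  rw [binCdf, Finset.sum_eq_single 0 (fun i _ hi => by simp [zero_pow hi]) (by simp)]
  simp

theorem smallest_fixedPoint_monotone_general (k : ℕ) (s : ℝ)
    (α₁ α₂ : ℝ) (hα₁ : α₁ ∈ Set.Icc (0 : ℝ) 1)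
    (hle : α₁ ≤ α₂) (h₁ h₂ : ℝ)
    (h₁min : ∀ x ∈ Set.Icc (0 : ℝ) 1, 1 - (1 - α₁) * binCdf k s x = x → h₁ ≤ x)
    (h₂mem : h₂ ∈ Set.Icc (0 : ℝ) 1) (h₂fix : 1 - (1 - α₂) * binCdf k s h₂ = h₂) :
    h₁ ≤ h₂ := by
  set f : ℝ → ℝ := fun x => 1 - (1 - α₁) * binCdf k s x
  have hf0 : 0 ≤ f 0 := by simpa [f] using hα₁.1
  have hfh₂ : f h₂ ≤ h₂ := calc
    f h₂ ≤ 1 - (1 - α₂) * binCdf k s h₂ :=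
      sub_le_sub_left (mul_le_mul_of_nonneg_right (by linarith) (binCdf_nonneg k s h₂mem)) 1
    _ = h₂ := h₂fix
  obtain ⟨x, hx, hfx⟩ := exists_mem_Icc_isFixedPt (by fun_prop) h₂mem.1 hf0 hfh₂
  exact (h₁min x ⟨hx.1, hx.2.trans h₂mem.2⟩ hfx).trans hx.2

/-- The smallest fixed point `h*(α)` of `f_α(x) = 1 − (1−α) g_{k,s}(x)` in `[0,1]` is
monotone nondecreasing in `α`: if `α₁ ≤ α₂` and `h₁`, `h₂` are the respective smallest
fixed points, then `h₁ ≤ h₂`. -/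
theorem smallest_fixedPoint_monotone (k : ℕ) (hk : 1 ≤ k) (s : ℝ) (hs : 0 ≤ s)
    (α₁ α₂ : ℝ) (hα₁ : α₁ ∈ Set.Icc (0 : ℝ) 1) (hα₂ : α₂ ∈ Set.Icc (0 : ℝ) 1)
    (hle : α₁ ≤ α₂) (h₁ h₂ : ℝ)
    (h₁mem : h₁ ∈ Set.Icc (0 : ℝ) 1) (h₁fix : 1 - (1 - α₁) * binCdf k s h₁ = h₁)
    (h₁min : ∀ x ∈ Set.Icc (0 : ℝ) 1, 1 - (1 - α₁) * binCdf k s x = x → h₁ ≤ x)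
    (h₂mem : h₂ ∈ Set.Icc (0 : ℝ) 1) (h₂fix : 1 - (1 - α₂) * binCdf k s h₂ = h₂)
    (h₂min : ∀ x ∈ Set.Icc (0 : ℝ) 1, 1 - (1 - α₂) * binCdf k s x = x → h₂ ≤ x) :
    h₁ ≤ h₂ :=
  smallest_fixedPoint_monotone_general k s α₁ α₂ hα₁ hle h₁ h₂ h₁min h₂mem h₂fix
end

section
/- Let Δ ≥ 3 be an integer and θ a real number with 0 ≤ θ < Δ − 2, and for α ∈ (0,1) define f_α(x) = 1 − (1−α) g_{Δ−1,θ}(x), where g_{k,s}(x) = ∑_{i=0}^{⌊s⌋} C(k,i) x^i (1−x)^{k−i}. Then there exists α_crit < 1 such that: for every α with α_crit < α < 1, the equation h = f_α(h) has a unique solution in [0,1], namely h = 1; and for every α with 0 < α < α_crit, the equation h = f_α(h) has exactly three solutions h* < h** < h*** = 1 in [0,1]. -/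
open Polynomial Set

namespace bernsteinPolynomial
variable (R : Type*) [CommRing R]

theorem derivative_sum_range (n m : ℕ) :
    derivative (∑ ν ∈ Finset.range (m + 1), bernsteinPolynomial R n ν) =
      -(n : R[X]) * bernsteinPolynomial R (n - 1) m := by
  induction m with
  | zero => simp [derivative_zero]
  | succ m ih =>
    rw [Finset.sum_range_succ, derivative_add, ih, derivative_succ]
    ring

theorem eval_sub_eval_succ {n ν : ℕ} (h : ν < n) (x : R) :
    (bernsteinPolynomial R n ν - bernsteinPolynomial R n (ν + 1)).eval x =
      x ^ ν * (1 - x) ^ (n - ν - 1) * (n.choose ν - (n + 1).choose (ν + 1) * x) := by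
  obtain ⟨j, rfl⟩ : ∃ j, n = ν + 1 + j := ⟨n - (ν + 1), by omega⟩
  have e1 : ν + 1 + j - ν = j + 1 := by omega
  have e2 : ν + 1 + j - (ν + 1) = j := by omega
  simp only [bernsteinPolynomial, eval_sub, eval_mul, eval_pow, eval_X, eval_natCast, eval_one,
    e1, e2]
  rw [Nat.choose_succ_succ (ν + 1 + j) ν]
  push_cast
  ring

theorem exists_sign_change_sub_succ {n ν : ℕ} (h : ν < n) :
    ∃ x₀ ∈ Ioo (0 : ℝ) 1,
      (∀ x ∈ Ioo 0 x₀,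
        0 < (bernsteinPolynomial ℝ n ν - bernsteinPolynomial ℝ n (ν + 1)).eval x) ∧
      ∀ x ∈ Ioo x₀ 1,
        (bernsteinPolynomial ℝ n ν - bernsteinPolynomial ℝ n (ν + 1)).eval x < 0 := by
  have hc : (0 : ℝ) < n.choose ν := by exact_mod_cast Nat.choose_pos h.le
  have hcd : (n.choose ν : ℝ) < (n + 1).choose (ν + 1) := by
    rw [Nat.choose_succ_succ]; push_cast
    linarith [show (0 : ℝ) < n.choose (ν + 1) by exact_mod_cast Nat.choose_pos h]
  have hd : (0 : ℝ) < (n + 1).choose (ν + 1) := hc.trans hcd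
  have hfactor : ∀ x ∈ Ioo (0 : ℝ) 1, 0 < x ^ ν * (1 - x) ^ (n - ν - 1) := fun x hx =>
    mul_pos (pow_pos hx.1 _) (pow_pos (sub_pos.2 hx.2) _)
  refine ⟨n.choose ν / (n + 1).choose (ν + 1), ⟨div_pos hc hd, (div_lt_one hd).2 hcd⟩,
    fun x hx => ?_, fun x hx => ?_⟩
  · rw [eval_sub_eval_succ ℝ h]
    refine mul_pos (hfactor x ⟨hx.1, hx.2.trans ((div_lt_one hd).2 hcd)⟩) ?_
    linarith [(lt_div_iff₀ hd).1 hx.2]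
  · rw [eval_sub_eval_succ ℝ h]
    refine mul_neg_of_pos_of_neg (hfactor x ⟨(div_pos hc hd).trans hx.1, hx.2⟩) ?_
    linarith [(div_lt_iff₀ hd).1 hx.1]

end bernsteinPolynomial

section Unimodal
variable {f : ℝ → ℝ} {a c b : ℝ}

theorem le_of_strictMonoOn_strictAntiOn (hmono : StrictMonoOn f (Icc a c))
    (hanti : StrictAntiOn f (Icc c b)) {x : ℝ} (hx : x ∈ Icc a b) : f x ≤ f c := by
  rcases le_total x c with hxc | hcx
  · exact hmono.monotoneOn ⟨hx.1, hxc⟩ (right_mem_Icc.2 (hx.1.trans hxc)) hxc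
  · exact hanti.antitoneOn (left_mem_Icc.2 (hcx.trans hx.2)) ⟨hcx, hx.2⟩ hcx


theorem exists_sign_change_of_strictAntiOn_strictMonoOn (hf : ContinuousOn f (Icc a b))
    (hac : a < c) (hcb : c < b) (hanti : StrictAntiOn f (Icc a c))
    (hmono : StrictMonoOn f (Icc c b)) (ha : 0 < f a) (hb : f b = 0) :
    ∃ r ∈ Ioo a c, (∀ x ∈ Ioo a r, 0 < f x) ∧ ∀ x ∈ Ioo r b, f x < 0 := by
  have hfc : f c < 0 := hb ▸ hmono (left_mem_Icc.2 hcb.le) (right_mem_Icc.2 hcb.le) hcb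
  obtain ⟨r, hr, hfr⟩ := intermediate_value_Ioo' hac.le (hf.mono (Icc_subset_Icc_right hcb.le))
    ⟨hfc, ha⟩
  refine ⟨r, hr, fun x hx => ?_, fun x hx => ?_⟩
  · exact hfr ▸ hanti ⟨hx.1.le, hx.2.le.trans hr.2.le⟩ ⟨hr.1.le, hr.2.le⟩ hx.2
  · rcases le_total x c with hxc | hcx
    · exact hfr ▸ hanti ⟨hr.1.le, hr.2.le⟩ ⟨hr.1.le.trans hx.1.le, hxc⟩ hx.1
    · rcases hcx.eq_or_lt with rfl | hcx
      · exact hfc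
      · exact hb ▸ hmono ⟨hcx.le, hx.2.le⟩ (right_mem_Icc.2 hcb.le) hx.2

theorem exists_eq_pair_of_strictMonoOn_strictAntiOn {v : ℝ} (hf : ContinuousOn f (Icc a b))
    (hac : a ≤ c) (hcb : c ≤ b) (hmono : StrictMonoOn f (Icc a c))
    (hanti : StrictAntiOn f (Icc c b)) (ha : f a < v) (hb : f b < v) (hc : v < f c) :
    ∃ x ∈ Ioo a c, ∃ y ∈ Ioo c b, {u | u ∈ Icc a b ∧ f u = v} = {x, y} := by
  obtain ⟨x, hx, hfx⟩ :=
    intermediate_value_Ioo hac (hf.mono (Icc_subset_Icc_right hcb)) ⟨ha, hc⟩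
  obtain ⟨y, hy, hfy⟩ :=
    intermediate_value_Ioo' hcb (hf.mono (Icc_subset_Icc_left hac)) ⟨hb, hc⟩
  refine ⟨x, hx, y, hy, Set.ext fun u => ⟨fun ⟨hu, hfu⟩ => ?_, ?_⟩⟩
  · rcases le_total u c with huc | hcu
    · exact Or.inl (hmono.injOn ⟨hu.1, huc⟩ (Ioo_subset_Icc_self hx) (hfu.trans hfx.symm))
    · exact Or.inr (hanti.injOn ⟨hcu, hu.2⟩ (Ioo_subset_Icc_self hy) (hfu.trans hfy.symm))
  · rintro (rfl | rfl)
    · exact ⟨⟨hx.1.le, hx.2.le.trans hcb⟩, hfx⟩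
    · exact ⟨⟨hac.trans hy.1.le, hy.2.le⟩, hfy⟩

end Unimodal

noncomputable def binCdfPoly (k m : ℕ) : ℝ[X] :=
  ∑ ν ∈ Finset.range (m + 1), bernsteinPolynomial ℝ k ν

noncomputable def cdfRatio (k m : ℕ) : ℝ[X] :=
  ∑ ν ∈ Finset.range (m + 1), (k.choose ν : ℝ[X]) * X ^ ν * (1 - X) ^ (k - 1 - ν)

noncomputable def cdfRatioNumer (k m : ℕ) : ℝ[X] :=
  binCdfPoly k m + (1 - X) * derivative (binCdfPoly k m)

theorem binCdf_eq_eval (k : ℕ) (s x : ℝ) : binCdf k s x = (binCdfPoly k ⌊s⌋₊).eval x := by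
  simp [binCdf, binCdfPoly, bernsteinPolynomial, eval_finsetSum]

theorem binCdfPoly_eval_zero (k m : ℕ) : (binCdfPoly k m).eval 0 = 1 := by
  simp [binCdfPoly, eval_finsetSum, bernsteinPolynomial.eval_at_0]

theorem binCdfPoly_eval_one {k m : ℕ} (h : m < k) : (binCdfPoly k m).eval 1 = 0 := by
  simp only [binCdfPoly, eval_finsetSum, bernsteinPolynomial.eval_at_1]
  exact Finset.sum_eq_zero fun ν hν => if_neg (by simp at hν; omega)

theorem one_sub_X_mul_cdfRatio {k m : ℕ} (h : m < k) :
    (1 - X) * cdfRatio k m = binCdfPoly k m := by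
  simp only [cdfRatio, binCdfPoly, Finset.mul_sum]
  refine Finset.sum_congr rfl fun ν hν => ?_
  rw [bernsteinPolynomial, show k - ν = k - 1 - ν + 1 by simp at hν; omega]
  ring

theorem cdfRatio_eval_zero {k m : ℕ} (h : m < k) : (cdfRatio k m).eval 0 = 1 := by
  simpa [binCdfPoly_eval_zero] using congrArg (eval 0) (one_sub_X_mul_cdfRatio h)

theorem cdfRatio_eval_one {k m : ℕ} (h : m + 2 ≤ k) : (cdfRatio k m).eval 1 = 0 := by
  simp only [cdfRatio, eval_finsetSum]
  refine Finset.sum_eq_zero fun ν hν => ?_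
  simp [zero_pow (show k - 1 - ν ≠ 0 by simp at hν; omega)]

theorem cdfRatio_zero_eval_le_one {k : ℕ} {x : ℝ} (hx : x ∈ Icc 0 1) :
    (cdfRatio k 0).eval x ≤ 1 := by
  simpa [cdfRatio] using pow_le_one₀ (sub_nonneg.2 hx.2) (by linarith [hx.1])

theorem one_sub_X_sq_mul_derivative_cdfRatio {k m : ℕ} (h : m < k) :
    (1 - X) ^ 2 * derivative (cdfRatio k m) = cdfRatioNumer k m := by
  have hd := congrArg derivative (one_sub_X_mul_cdfRatio h)
  simp only [derivative_mul, derivative_sub, derivative_one, derivative_X] at hd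
  rw [cdfRatioNumer, ← hd, ← one_sub_X_mul_cdfRatio h]
  ring

theorem derivative_cdfRatioNumer (k m : ℕ) :
    derivative (cdfRatioNumer k m) = (1 - X) * derivative (derivative (binCdfPoly k m)) := by
  simp only [cdfRatioNumer, derivative_add, derivative_mul, derivative_sub, derivative_one,
    derivative_X]
  ring

theorem derivative_derivative_binCdfPoly (k ν : ℕ) :
    derivative (derivative (binCdfPoly k (ν + 1))) =
      -(k : ℝ[X]) * ((k - 1 : ℕ) : ℝ[X]) *
        (bernsteinPolynomial ℝ (k - 1 - 1) ν - bernsteinPolynomial ℝ (k - 1 - 1) (ν + 1)) := by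
  rw [binCdfPoly, bernsteinPolynomial.derivative_sum_range, derivative_mul, derivative_neg,
    derivative_natCast, bernsteinPolynomial.derivative_succ]
  ring

theorem cdfRatioNumer_antitone_monotone {k ν : ℕ} (h : ν + 3 ≤ k) :
    ∃ x₀ ∈ Ioo (0 : ℝ) 1, StrictAntiOn (cdfRatioNumer k (ν + 1)).eval (Icc 0 x₀) ∧
      StrictMonoOn (cdfRatioNumer k (ν + 1)).eval (Icc x₀ 1) := by
  obtain ⟨x₀, hx₀, hpos, hneg⟩ :=
    bernsteinPolynomial.exists_sign_change_sub_succ (n := k - 1 - 1) (ν := ν) (by omega)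
  have hk : (0 : ℝ) < k * (k - 1 : ℕ) := by
    have : 0 < k * (k - 1) := Nat.mul_pos (by omega) (by omega)
    exact_mod_cast this
  set D := bernsteinPolynomial ℝ (k - 1 - 1) ν - bernsteinPolynomial ℝ (k - 1 - 1) (ν + 1) with hD
  have hderiv : ∀ x, (derivative (cdfRatioNumer k (ν + 1))).eval x =
      -((1 - x) * (k * (k - 1 : ℕ)) * D.eval x) := by
    intro x
    rw [derivative_cdfRatioNumer, derivative_derivative_binCdfPoly, ← hD]
    simp only [eval_mul, eval_neg, eval_sub, eval_one, eval_X, eval_natCast]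
    ring
  refine ⟨x₀, hx₀,
    strictAntiOn_of_deriv_neg (convex_Icc 0 x₀) (Polynomial.continuousOn _) ?_,
    strictMonoOn_of_deriv_pos (convex_Icc x₀ 1) (Polynomial.continuousOn _) ?_⟩
  · intro x hx
    rw [interior_Icc] at hx
    rw [Polynomial.deriv, hderiv, neg_lt_zero]
    exact mul_pos (mul_pos (sub_pos.2 (hx.2.trans hx₀.2)) hk) (hpos x hx)
  · intro x hx
    rw [interior_Icc] at hx
    rw [Polynomial.deriv, hderiv, neg_pos]
    exact mul_neg_of_pos_of_neg (mul_pos (sub_pos.2 hx.2) hk) (hneg x hx)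

theorem cdfRatioNumer_eval_zero (k ν : ℕ) : (cdfRatioNumer k (ν + 1)).eval 0 = 1 := by
  rw [cdfRatioNumer, binCdfPoly, bernsteinPolynomial.derivative_sum_range, ← binCdfPoly]
  simp [binCdfPoly_eval_zero, bernsteinPolynomial.eval_at_0]

theorem cdfRatioNumer_eval_one {k m : ℕ} (h : m < k) : (cdfRatioNumer k m).eval 1 = 0 := by
  simp [cdfRatioNumer, binCdfPoly_eval_one h]

theorem cdfRatio_unimodal {k ν : ℕ} (h : ν + 3 ≤ k) :
    ∃ r ∈ Ioo (0 : ℝ) 1, StrictMonoOn (cdfRatio k (ν + 1)).eval (Icc 0 r) ∧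
      StrictAntiOn (cdfRatio k (ν + 1)).eval (Icc r 1) := by
  obtain ⟨x₀, hx₀, hanti, hmono⟩ := cdfRatioNumer_antitone_monotone h
  obtain ⟨r, hr, hpos, hneg⟩ := exists_sign_change_of_strictAntiOn_strictMonoOn
    (Polynomial.continuousOn _) hx₀.1 hx₀.2 hanti hmono
    ((cdfRatioNumer_eval_zero k ν).symm ▸ one_pos)
    (cdfRatioNumer_eval_one (by omega))
  have hderiv : ∀ x ∈ Ioo (0 : ℝ) 1,
      deriv (cdfRatio k (ν + 1)).eval x = (cdfRatioNumer k (ν + 1)).eval x / (1 - x) ^ 2 := by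
    intro x hx
    rw [Polynomial.deriv, ← one_sub_X_sq_mul_derivative_cdfRatio (by omega), eval_mul,
      eval_pow, eval_sub, eval_one, eval_X,
      mul_div_cancel_left₀ _ (pow_pos (sub_pos.2 hx.2) 2).ne']
  refine ⟨r, ⟨hr.1, hr.2.trans hx₀.2⟩,
    strictMonoOn_of_deriv_pos (convex_Icc 0 r) (Polynomial.continuousOn _) fun x hx => ?_,
    strictAntiOn_of_deriv_neg (convex_Icc r 1) (Polynomial.continuousOn _) fun x hx => ?_⟩
  · rw [interior_Icc] at hx
    rw [hderiv x ⟨hx.1, hx.2.trans (hr.2.trans hx₀.2)⟩]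
    exact div_pos (hpos x hx) (pow_pos (by linarith [hx.2, hr.2, hx₀.2]) 2)
  · rw [interior_Icc] at hx
    rw [hderiv x ⟨hr.1.trans hx.1, hx.2⟩]
    exact div_neg_of_neg_of_pos (hneg x hx) (pow_pos (sub_pos.2 hx.2) 2)

theorem fixedPoints_eq_insert_one {k : ℕ} {s α : ℝ} (hs : ⌊s⌋₊ < k) (hα : α < 1) :
    {h : ℝ | h ∈ Icc 0 1 ∧ 1 - (1 - α) * binCdf k s h = h} =
      insert 1 {h : ℝ | h ∈ Icc 0 1 ∧ (cdfRatio k ⌊s⌋₊).eval h = (1 - α)⁻¹} := by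
  have hα' : 1 - α ≠ 0 := (sub_pos.2 hα).ne'
  have hfixed : ∀ h, 1 - (1 - α) * binCdf k s h = h ↔
      h = 1 ∨ (cdfRatio k ⌊s⌋₊).eval h = (1 - α)⁻¹ := by
    intro h
    have hfac : h - (1 - (1 - α) * binCdf k s h) =
        (h - 1) * (1 - α) * ((1 - α)⁻¹ - (cdfRatio k ⌊s⌋₊).eval h) := by
      rw [binCdf_eq_eval, ← one_sub_X_mul_cdfRatio hs]
      simp only [eval_mul, eval_sub, eval_one, eval_X]
      field_simp
      ring
    rw [eq_comm, ← sub_eq_zero, hfac, mul_eq_zero, mul_eq_zero, sub_eq_zero, or_iff_left hα',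
      sub_eq_zero, eq_comm (a := (1 - α)⁻¹)]
  ext h
  simp only [mem_ofPred_eq, mem_insert_iff, hfixed]
  constructor
  · rintro ⟨hh, rfl | hQ⟩
    exacts [Or.inl rfl, Or.inr ⟨hh, hQ⟩]
  · rintro (rfl | ⟨hh, hQ⟩)
    exacts [⟨right_mem_Icc.2 zero_le_one, Or.inl rfl⟩, ⟨hh, Or.inr hQ⟩]

theorem fixedPoints_eq_singleton {k : ℕ} {s α : ℝ} (hs : ⌊s⌋₊ < k) (hα : α < 1)
    (hQ : ∀ h ∈ Icc (0 : ℝ) 1, (cdfRatio k ⌊s⌋₊).eval h < (1 - α)⁻¹) :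
    {h : ℝ | h ∈ Icc 0 1 ∧ 1 - (1 - α) * binCdf k s h = h} = {1} := by
  rw [fixedPoints_eq_insert_one hs hα, singleton_def]
  exact congrArg _ (eq_empty_of_forall_notMem fun h hh => (hQ h hh.1).ne hh.2)

theorem fixedPoints_eq_triple {k : ℕ} {s α r : ℝ} (hs : ⌊s⌋₊ + 2 ≤ k) (hα : α < 1)
    (hr : r ∈ Ioo (0 : ℝ) 1) (hmono : StrictMonoOn (cdfRatio k ⌊s⌋₊).eval (Icc 0 r))
    (hanti : StrictAntiOn (cdfRatio k ⌊s⌋₊).eval (Icc r 1)) (hv : 1 < (1 - α)⁻¹)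
    (hvr : (1 - α)⁻¹ < (cdfRatio k ⌊s⌋₊).eval r) :
    ∃ h₁ h₂ : ℝ, h₁ < h₂ ∧ h₂ < 1 ∧
      {h : ℝ | h ∈ Icc 0 1 ∧ 1 - (1 - α) * binCdf k s h = h} = {h₁, h₂, 1} := by
  obtain ⟨x, hx, y, hy, hxy⟩ := exists_eq_pair_of_strictMonoOn_strictAntiOn
    (cdfRatio k ⌊s⌋₊).continuousOn hr.1.le hr.2.le hmono hanti
    ((cdfRatio_eval_zero (by omega)).trans_lt hv)
    ((cdfRatio_eval_one hs).trans_lt (one_pos.trans hv)) hvr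
  refine ⟨x, y, hx.2.trans hy.1, hy.2, ?_⟩
  rw [fixedPoints_eq_insert_one (by omega) hα, hxy, insert_comm, pair_comm]

theorem fixedPoint_critical_alpha_general (Δ : ℕ) (θ : ℝ)
    (hθ0 : 0 ≤ θ) (hθ : θ < (Δ : ℝ) - 2) :
    ∃ αcrit : ℝ, αcrit < 1 ∧
      (∀ α : ℝ, αcrit < α → α < 1 →
        {h : ℝ | h ∈ Set.Icc (0 : ℝ) 1 ∧ 1 - (1 - α) * binCdf (Δ - 1) θ h = h} = {1}) ∧
      (∀ α : ℝ, 0 < α → α < αcrit →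
        ∃ h₁ h₂ h₃ : ℝ, h₁ < h₂ ∧ h₂ < h₃ ∧ h₃ = 1 ∧
          {h : ℝ | h ∈ Set.Icc (0 : ℝ) 1 ∧ 1 - (1 - α) * binCdf (Δ - 1) θ h = h} =
            {h₁, h₂, h₃}) := by
  have hm : ⌊θ⌋₊ + 2 < Δ := by
    have : (⌊θ⌋₊ + 2 : ℝ) < Δ := by linarith [Nat.floor_le hθ0]
    exact_mod_cast this
  by_cases hm0 : ⌊θ⌋₊ = 0
  · refine ⟨0, zero_lt_one, fun α hα0 hα1 => ?_, fun α hα0 hα => (hα0.not_gt hα).elim⟩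
    refine fixedPoints_eq_singleton (by omega) hα1 fun h hh => ?_
    rw [hm0]
    exact (cdfRatio_zero_eval_le_one hh).trans_lt
      ((one_lt_inv₀ (sub_pos.2 hα1)).2 (sub_lt_self 1 hα0))
  obtain ⟨ν, hν⟩ := Nat.exists_eq_add_one_of_ne_zero hm0
  obtain ⟨r, hr, hmono, hanti⟩ := cdfRatio_unimodal (k := Δ - 1) (ν := ν) (by omega)
  rw [← hν] at hmono hanti
  set M := (cdfRatio (Δ - 1) ⌊θ⌋₊).eval r
  have hM : 1 < M := cdfRatio_eval_zero (k := Δ - 1) (m := ⌊θ⌋₊) (by omega) ▸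
    hmono (left_mem_Icc.2 hr.1.le) (right_mem_Icc.2 hr.1.le) hr.1
  have hM' : 0 < M⁻¹ := inv_pos.2 (by linarith)
  refine ⟨1 - M⁻¹, sub_lt_self _ hM', fun α hα hα1 => ?_, fun α hα0 hα => ?_⟩
  · exact fixedPoints_eq_singleton (by omega) hα1 fun h hh =>
      (le_of_strictMonoOn_strictAntiOn hmono hanti hh).trans_lt
        ((lt_inv_comm₀ (by linarith) (sub_pos.2 hα1)).2 (by linarith))
  have hα1 : α < 1 := by linarith
  obtain ⟨h₁, h₂, h₁₂, h₂₁, hS⟩ := fixedPoints_eq_triple (by omega) hα1 hr hmono hanti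
    ((one_lt_inv₀ (sub_pos.2 hα1)).2 (sub_lt_self 1 hα0))
    ((inv_lt_comm₀ (sub_pos.2 hα1) (by linarith)).2 (by linarith))
  exact ⟨h₁, h₂, 1, h₁₂, h₂₁, rfl, hS⟩

/-- Main discrete-time theorem: for `Δ ≥ 3` and `0 ≤ θ < Δ − 2` there is a critical
value `α_crit < 1` such that for `α_crit < α < 1` the fixed point equation
`h = 1 − (1−α) g_{Δ−1,θ}(h)` has the unique solution `h = 1` in `[0,1]`, while for
`0 < α < α_crit` it has exactly three solutions `h* < h** < h*** = 1`. -/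
theorem fixedPoint_critical_alpha (Δ : ℕ) (hΔ : 3 ≤ Δ) (θ : ℝ)
    (hθ0 : 0 ≤ θ) (hθ : θ < (Δ : ℝ) - 2) :
    ∃ αcrit : ℝ, αcrit < 1 ∧
      (∀ α : ℝ, αcrit < α → α < 1 →
        {h : ℝ | h ∈ Set.Icc (0 : ℝ) 1 ∧ 1 - (1 - α) * binCdf (Δ - 1) θ h = h} = {1}) ∧
      (∀ α : ℝ, 0 < α → α < αcrit →
        ∃ h₁ h₂ h₃ : ℝ, h₁ < h₂ ∧ h₂ < h₃ ∧ h₃ = 1 ∧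
          {h : ℝ | h ∈ Set.Icc (0 : ℝ) 1 ∧ 1 - (1 - α) * binCdf (Δ - 1) θ h = h} =
            {h₁, h₂, h₃}) :=
  fixedPoint_critical_alpha_general Δ θ hθ0 hθ
end
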